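/- arXiv:math/0304047 — 4 statements merged into one kernel-verified Lean document; each statement's English description precedes it below -/
import Mathlib

section
/- Let q be a real number with q > 1. For a natural number a write (1/q)_a = ∏_{j=1}^{a} (1 - q^{-j}) (with (1/q)_0 = 1). Then for every natural number n, ∑_{r=0}^{n} (-1)^{n-r} (1/q)_n q^r / ((1/q)_r (1/q)_{n-r}) = q^n · ∏_{j=1}^{⌈n/2⌉} (1 - q^{1-2j}). (Equivalently, the right side is q^n(1-1/q)(1-1/q^3)⋯(1-1/q^{n-1}) if n is even and q^n(1-1/q)(1-1/q^3)⋯(1-1/q^n) if n is odd.) -/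
/-!
Put `p = q⁻¹`. The quotient `(1/q)_n / ((1/q)_r (1/q)_{n-r})` is the Gaussian binomial
coefficient `[n, r]_p`, and after reflecting `r ↦ n - r` the sum becomes `q ^ n * H_n(-p)`, where
`H_n(x) = ∑_r [n, r]_p x ^ r` is the Rogers–Szegő polynomial. Pascal's rule together with the
absorption identity `(1 - p ^ (n - k)) [n, k] = (1 - p ^ (k + 1)) [n, k + 1]` yields the
three-term recurrence `H_{n+2} = (1 + x) H_{n+1} - x (1 - p ^ (n + 1)) H_n`. At `x = -p` it is
satisfied by the products `∏_{j < ⌈n/2⌉} (1 - p ^ (2j + 1))` as well (check the two parities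
of `n`), and the initial values agree.
-/

/-- The finite q-Pochhammer product `(1/q)_a = ∏_{j=1}^{a} (1 - q^{-j})`. -/
noncomputable def qPoch (q : ℝ) (a : ℕ) : ℝ := ∏ j ∈ Finset.Icc 1 a, (1 - q⁻¹ ^ j)

open Finset

section CommRing

variable {R : Type*} [CommRing R]

/-- Defined by Pascal's rule, so that no division is needed; over `ℝ` with `p = q⁻¹` it is the
quotient of Pochhammer symbols. -/
def gaussBinom (p : R) : ℕ → ℕ → R
  | _, 0 => 1
  | 0, _ + 1 => 0
  | n + 1, k + 1 => gaussBinom p n k + p ^ (k + 1) * gaussBinom p n (k + 1)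

@[simp]
theorem gaussBinom_zero_right (p : R) (n : ℕ) : gaussBinom p n 0 = 1 := by
  cases n <;> rfl

@[simp]
theorem gaussBinom_zero_succ (p : R) (k : ℕ) : gaussBinom p 0 (k + 1) = 0 := rfl

theorem gaussBinom_succ_succ (p : R) (n k : ℕ) :
    gaussBinom p (n + 1) (k + 1) = gaussBinom p n k + p ^ (k + 1) * gaussBinom p n (k + 1) :=
  rfl

theorem gaussBinom_eq_zero_of_lt (p : R) {n k : ℕ} (h : n < k) : gaussBinom p n k = 0 := by
  induction n generalizing k with
  | zero => obtain ⟨k, rfl⟩ := Nat.exists_eq_add_of_lt h; simp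
  | succ n ih =>
    obtain ⟨k, rfl⟩ := Nat.exists_eq_add_of_lt (Nat.zero_lt_of_lt h)
    rw [gaussBinom_succ_succ, ih (by omega), ih (by omega)]
    ring

theorem one_sub_pow_mul_gaussBinom (p : R) (n k : ℕ) :
    (1 - p ^ (n - k)) * gaussBinom p n k = (1 - p ^ (k + 1)) * gaussBinom p n (k + 1) := by
  induction n generalizing k with
  | zero => cases k <;> simp
  | succ n ih =>
    cases k with
    | zero =>
      have h := ih 0
      simp only [gaussBinom_zero_right, gaussBinom_succ_succ, Nat.sub_zero] at h ⊢
      linear_combination p * h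
    | succ k =>
      rw [gaussBinom_succ_succ, gaussBinom_succ_succ, Nat.add_sub_add_right]
      rcases lt_or_ge k n with hk | hk
      · obtain ⟨m, rfl⟩ := Nat.exists_eq_add_of_lt hk
        have e1 : k + m + 1 - k = m + 1 := by omega
        have e2 : k + m + 1 - (k + 1) = m := by omega
        have h1 := ih k
        have h2 := ih (k + 1)
        rw [e1] at h1 ⊢
        rw [e2] at h2
        linear_combination h1 + p ^ (k + 2) * h2
      · have h := ih k
        rw [gaussBinom_eq_zero_of_lt p (by omega : n < k + 1), mul_zero] at h
        rw [gaussBinom_eq_zero_of_lt p (by omega : n < k + 1),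
          gaussBinom_eq_zero_of_lt p (by omega : n < k + 1 + 1)]
        linear_combination h

def rogersSzego (p x : R) (n : ℕ) : R :=
  ∑ k ∈ range (n + 1), gaussBinom p n k * x ^ k

theorem rogersSzego_succ (p x : R) (n : ℕ) :
    rogersSzego p x (n + 1) = x * rogersSzego p x n + rogersSzego p (p * x) n := by
  have hshift : rogersSzego p (p * x) n =
      ∑ k ∈ range (n + 1), gaussBinom p n (k + 1) * (p * x) ^ (k + 1) + 1 := by
    rw [sum_range_succ, gaussBinom_eq_zero_of_lt p n.lt_succ_self, rogersSzego,
      sum_range_succ' _ n]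
    simp
  rw [hshift, rogersSzego, sum_range_succ', rogersSzego, mul_sum, ← add_assoc,
    ← sum_add_distrib]
  simp only [gaussBinom_succ_succ, gaussBinom_zero_right]
  congr 1
  · exact sum_congr rfl fun k _ => by ring
  · simp

theorem rogersSzego_mul_sub_rogersSzego_mul_mul (p x : R) (n : ℕ) :
    rogersSzego p (p * x) n - rogersSzego p (p * (p * x)) n =
      p * x * rogersSzego p (p * x) n - p ^ (n + 1) * x * rogersSzego p x n := by
  set f : ℕ → R := fun k => (1 - p ^ k) * gaussBinom p n k * (p * x) ^ k with hf
  have hreindex : ∑ k ∈ range (n + 1), f k = ∑ k ∈ range (n + 1), f (k + 1) := by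
    have h0 : f 0 = 0 := by simp [hf]
    have hn : f (n + 1) = 0 := by simp [hf, gaussBinom_eq_zero_of_lt p n.lt_succ_self]
    have h := sum_range_succ' f (n + 1)
    rwa [sum_range_succ, h0, hn, add_zero, add_zero] at h
  calc rogersSzego p (p * x) n - rogersSzego p (p * (p * x)) n
      = ∑ k ∈ range (n + 1), f k := by
        rw [rogersSzego, rogersSzego, ← sum_sub_distrib]
        exact sum_congr rfl fun k _ => by ring
    _ = ∑ k ∈ range (n + 1), f (k + 1) := hreindex
    _ = ∑ k ∈ range (n + 1), (p * x * (gaussBinom p n k * (p * x) ^ k) -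
          p ^ (n + 1) * x * (gaussBinom p n k * x ^ k)) := by
        refine sum_congr rfl fun k hk => ?_
        have hpow : p ^ (n + 1) = p ^ (n - k) * p ^ (k + 1) := by
          rw [← pow_add]; congr 1; have := mem_range.mp hk; omega
        rw [hf]
        dsimp only
        rw [← one_sub_pow_mul_gaussBinom, hpow]
        ring
    _ = p * x * rogersSzego p (p * x) n - p ^ (n + 1) * x * rogersSzego p x n := by
        rw [sum_sub_distrib, ← mul_sum, ← mul_sum, rogersSzego, rogersSzego]

theorem rogersSzego_succ_succ (p x : R) (n : ℕ) :
    rogersSzego p x (n + 2) =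
      (1 + x) * rogersSzego p x (n + 1) - x * (1 - p ^ (n + 1)) * rogersSzego p x n := by
  linear_combination rogersSzego_succ p x (n + 1) + rogersSzego_succ p (p * x) n
    - rogersSzego_mul_sub_rogersSzego_mul_mul p x n - rogersSzego_succ p x n

theorem prod_one_sub_pow_odd_recurrence (p : R) (n : ℕ) :
    ∏ j ∈ range ((n + 2 + 1) / 2), (1 - p ^ (2 * j + 1)) =
      (1 - p) * ∏ j ∈ range ((n + 1 + 1) / 2), (1 - p ^ (2 * j + 1)) +
        p * (1 - p ^ (n + 1)) * ∏ j ∈ range ((n + 1) / 2), (1 - p ^ (2 * j + 1)) := by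
  rcases Nat.even_or_odd' n with ⟨c, rfl | rfl⟩
  · rw [show (2 * c + 2 + 1) / 2 = c + 1 by omega, show (2 * c + 1 + 1) / 2 = c + 1 by omega,
      show (2 * c + 1) / 2 = c by omega, prod_range_succ]
    ring
  · rw [show (2 * c + 1 + 2 + 1) / 2 = c + 1 + 1 by omega,
      show (2 * c + 1 + 1 + 1) / 2 = c + 1 by omega, show (2 * c + 1 + 1) / 2 = c + 1 by omega,
      prod_range_succ _ (c + 1)]
    ring

theorem rogersSzego_neg_self (p : R) (n : ℕ) :
    rogersSzego p (-p) n = ∏ j ∈ range ((n + 1) / 2), (1 - p ^ (2 * j + 1)) := by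
  induction n using Nat.twoStepInduction with
  | zero => simp [rogersSzego]
  | one => simp [rogersSzego, sum_range_succ, gaussBinom_succ_succ, sub_eq_add_neg]
  | more n ih0 ih1 =>
    rw [rogersSzego_succ_succ, ih0, ih1, prod_one_sub_pow_odd_recurrence]
    ring

end CommRing

theorem qPoch_succ (q : ℝ) (a : ℕ) : qPoch q (a + 1) = qPoch q a * (1 - q⁻¹ ^ (a + 1)) := by
  rw [qPoch, qPoch, prod_Icc_succ_top (Nat.le_add_left 1 a)]

theorem qPoch_pos {q : ℝ} (hq : 1 < q) (a : ℕ) : 0 < qPoch q a :=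
  prod_pos fun j hj => sub_pos.mpr <| pow_lt_one₀ (inv_nonneg.mpr (by positivity))
    (inv_lt_one_of_one_lt₀ hq) (by have := (mem_Icc.mp hj).1; omega)

theorem gaussBinom_inv_mul_qPoch_mul_qPoch (q : ℝ) {n k : ℕ} (h : k ≤ n) :
    gaussBinom q⁻¹ n k * qPoch q k * qPoch q (n - k) = qPoch q n := by
  induction n generalizing k with
  | zero => obtain rfl := Nat.le_zero.mp h; simp [qPoch]
  | succ n ih =>
    cases k with
    | zero => simp [qPoch]
    | succ k =>
      obtain ⟨m, rfl⟩ := Nat.exists_eq_add_of_le (Nat.le_of_succ_le_succ h)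
      have hk := ih (Nat.le_add_right k m)
      rw [Nat.add_sub_cancel_left] at hk
      rw [gaussBinom_succ_succ, Nat.add_sub_add_right, Nat.add_sub_cancel_left, qPoch_succ,
        qPoch_succ q (k + m)]
      cases m with
      | zero =>
        rw [gaussBinom_eq_zero_of_lt _ (by omega : k + 0 < k + 1)]
        linear_combination (1 - q⁻¹ ^ (k + 1)) * hk
      | succ m =>
        have hk1 := ih (by omega : k + 1 ≤ k + (m + 1))
        rw [show k + (m + 1) - (k + 1) = m by omega] at hk1
        rw [qPoch_succ q m] at hk ⊢
        rw [qPoch_succ q k] at hk1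
        linear_combination
          (1 - q⁻¹ ^ (k + 1)) * hk + q⁻¹ ^ (k + 1) * (1 - q⁻¹ ^ (m + 1)) * hk1

theorem gaussBinom_inv_eq_div {q : ℝ} (hq : 1 < q) {n k : ℕ} (h : k ≤ n) :
    gaussBinom q⁻¹ n k = qPoch q n / (qPoch q k * qPoch q (n - k)) := by
  rw [eq_div_iff (mul_pos (qPoch_pos hq k) (qPoch_pos hq (n - k))).ne', ← mul_assoc,
    gaussBinom_inv_mul_qPoch_mul_qPoch q h]

theorem prod_Icc_one_sub_zpow_eq_prod_range (q : ℝ) (m : ℕ) :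
    ∏ j ∈ Icc 1 m, (1 - q ^ (1 - 2 * (j : ℤ))) =
      ∏ j ∈ range m, (1 - q⁻¹ ^ (2 * j + 1)) := by
  induction m with
  | zero => simp
  | succ m ih =>
    rw [prod_Icc_succ_top (Nat.le_add_left 1 m), prod_range_succ, ih,
      show 1 - 2 * ((m + 1 : ℕ) : ℤ) = -((2 * m + 1 : ℕ) : ℤ) by push_cast; ring,
      zpow_neg, zpow_natCast, inv_pow]

theorem stmt0 (q : ℝ) (hq : 1 < q) (n : ℕ) :
    ∑ r ∈ Finset.range (n + 1),
      (-1 : ℝ) ^ (n - r) * qPoch q n * q ^ r / (qPoch q r * qPoch q (n - r)) =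
    q ^ n * ∏ j ∈ Finset.Icc 1 ((n + 1) / 2), (1 - q ^ (1 - 2 * (j : ℤ))) := by
  calc ∑ r ∈ range (n + 1),
        (-1 : ℝ) ^ (n - r) * qPoch q n * q ^ r / (qPoch q r * qPoch q (n - r))
      = ∑ r ∈ range (n + 1), q ^ n * (gaussBinom q⁻¹ n r * (-q⁻¹) ^ r) := by
        rw [← sum_range_reflect]
        refine sum_congr rfl fun r hr => ?_
        have hr : r ≤ n := Nat.lt_succ_iff.mp (mem_range.mp hr)
        rw [Nat.add_sub_cancel, Nat.sub_sub_self hr, gaussBinom_inv_eq_div hq hr,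
          pow_sub₀ q (by positivity) hr, neg_pow q⁻¹, inv_pow]
        ring
    _ = q ^ n * rogersSzego q⁻¹ (-q⁻¹) n := by rw [rogersSzego, mul_sum]
    _ = q ^ n * ∏ j ∈ Icc 1 ((n + 1) / 2), (1 - q ^ (1 - 2 * (j : ℤ))) := by
        rw [rogersSzego_neg_self, prod_Icc_one_sub_zpow_eq_prod_range]
end

section
/- Let q be a prime power and n ≥ 1. The number of invertible symmetric n×n matrices over F_q (equivalently, the number of g ∈ GL(n,F_q) with g·g^τ = 1) equals ∏_{i=1}^{n} c_i, where c_i = q^i - 1 if i is odd and c_i = q^i if i is even; that is, it equals (q-1)·q^2·(q^3-1)·q^4·(q^5-1)⋯ with n factors altogether. -/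
/-!
Let `s(m)` count the invertible symmetric `m × m` matrices over `F_q`, and write such a matrix
of size `1 + m` as `S = [[a, bᵀ], [b, D]]`. If `a ≠ 0`, then `S ↦ (a, b, D - b a⁻¹ bᵀ)` (Schur
complement) is a bijection onto `F_qˣ × F_q^m × {invertible symmetric m × m}`: `(q - 1) q^m s(m)`
matrices. If `a = 0`, then `b ≠ 0`, and congruence by `diag(1, g)` moves `b` to any other nonzero
column, so all `q^m - 1` fibres have the size of the one with `b = e₁`. There the leading `2 × 2`
block is `[[0, 1], [1, d]]`, always invertible, and a second Schur complement gives
`q · q^(m-1) s(m-1)`. The recursion `s(m+1) = (q-1) q^m s(m) + (q^m - 1) q^m s(m-1)` is solved by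
the product formula.
-/

open Matrix

/-- The inverse-transpose automorphism of `GL(n,F)`: `g ↦ (gᵀ)⁻¹`. -/
noncomputable def tau {n : ℕ} {F : Type} [Field F] (g : GL (Fin n) F) : GL (Fin n) F where
  val := (g⁻¹).val.transpose
  inv := g.val.transpose
  val_inv := by
    rw [← Matrix.transpose_mul, ← Units.val_mul, mul_inv_cancel, Units.val_one,
      Matrix.transpose_one]
  inv_val := by
    rw [← Matrix.transpose_mul, ← Units.val_mul, inv_mul_cancel, Units.val_one,
      Matrix.transpose_one]

abbrev InvertibleSymm (ι R : Type*) [Fintype ι] [DecidableEq ι] [CommRing R] :=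
  {S : Matrix ι ι R // S.IsSymm ∧ IsUnit S}

noncomputable def Units.subtypeEquivSubtypeIsUnit {M : Type*} [Monoid M] (P : M → Prop) :
    {u : Mˣ // P u} ≃ {x : M // P x ∧ IsUnit x} where
  toFun u := ⟨u.1, u.2, u.1.isUnit⟩
  invFun x := ⟨x.2.2.unit, x.2.1⟩
  left_inv _ := Subtype.ext (Units.ext rfl)
  right_inv _ := rfl

theorem Nat.card_subtype_eq_sum_card_fiber {α β : Type*} [Finite α] [Fintype β]
    (P : α → Prop) (f : α → β) :
    Nat.card {a // P a} = ∑ b, Nat.card {a // P a ∧ f a = b} := by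
  rw [← Nat.card_congr (Equiv.sigmaFiberEquiv fun a : {a // P a} => f a), Nat.card_sigma]
  exact Finset.sum_congr rfl fun b _ =>
    Nat.card_congr (Equiv.subtypeSubtypeEquivSubtypeInter P (f · = b))

theorem Nat.card_matrix_unit {κ F : Type*} [Fintype κ] [Fintype F] :
    Nat.card (Matrix κ Unit F) = Fintype.card F ^ Fintype.card κ := by
  simp [Matrix, Nat.card_fun, Nat.card_eq_fintype_card]

theorem Matrix.card_toCols₁_eq_zero {m n₁ n₂ α : Type*} [Zero α] :
    Nat.card {C : Matrix m (n₁ ⊕ n₂) α // C.toCols₁ = 0} = Nat.card (Matrix m n₂ α) :=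
  Nat.card_congr
    { toFun C := C.1.toCols₂
      invFun C := ⟨fromCols 0 C, toCols₁_fromCols _ _⟩
      left_inv C := Subtype.ext <|
        (congrArg (fromCols · C.1.toCols₂) C.2).symm.trans C.1.fromCols_toCols
      right_inv _ := toCols₂_fromCols _ _ }

theorem Matrix.isSymm_of_unit {α : Type*} (A : Matrix Unit Unit α) : A.IsSymm :=
  IsSymm.ext fun _ _ => rfl

section Blocks

variable {ι κ R : Type*}

theorem Matrix.IsSymm.mul_mul_transpose [CommRing R] [Fintype ι] {A : Matrix ι ι R}
    (hA : A.IsSymm) (B : Matrix κ ι R) : (B * A * Bᵀ).IsSymm := by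
  rw [IsSymm, transpose_mul, transpose_mul, transpose_transpose, hA.eq, Matrix.mul_assoc]

theorem Matrix.IsSymm.fromBlocks_toBlocks {S : Matrix (ι ⊕ κ) (ι ⊕ κ) R} (hS : S.IsSymm) :
    Matrix.fromBlocks S.toBlocks₁₁ S.toBlocks₂₁ᵀ S.toBlocks₂₁ S.toBlocks₂₂ = S := by
  conv_rhs => rw [← S.fromBlocks_toBlocks]
  congr
  ext i j
  exact (hS.apply (Sum.inr i) (Sum.inl j)).symm

theorem Matrix.IsSymm.toBlocks₁₁ {S : Matrix (ι ⊕ κ) (ι ⊕ κ) R} (hS : S.IsSymm) :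
    S.toBlocks₁₁.IsSymm :=
  hS.submatrix Sum.inl

theorem Matrix.IsSymm.toBlocks₂₂ {S : Matrix (ι ⊕ κ) (ι ⊕ κ) R} (hS : S.IsSymm) :
    S.toBlocks₂₂.IsSymm :=
  hS.submatrix Sum.inr

variable [Fintype ι] [DecidableEq ι] [Fintype κ] [DecidableEq κ] [CommRing R]

theorem Matrix.isUnit_fromBlocks_transpose_iff {A : Matrix ι ι R} (hA : IsUnit A)
    (C : Matrix κ ι R) (D : Matrix κ κ R) :
    IsUnit (fromBlocks A Cᵀ C D) ↔ IsUnit (D - C * A⁻¹ * Cᵀ) := by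
  let := hA.invertible
  rw [isUnit_fromBlocks_iff_of_invertible₁₁, invOf_eq_nonsing_inv]

theorem Matrix.isUnit_fromBlocks_zero_one (D : Matrix ι ι R) :
    IsUnit (fromBlocks (0 : Matrix ι ι R) 1 1 D) :=
  IsUnit.of_mul_eq_one (fromBlocks (-D) 1 1 0) (by simp [fromBlocks_multiply])

theorem Matrix.not_isUnit_of_toBlocks₁₁_eq_zero_of_toBlocks₂₁_eq_zero [Nontrivial R] [Nonempty ι]
    {S : Matrix (ι ⊕ κ) (ι ⊕ κ) R} (h₁₁ : S.toBlocks₁₁ = 0) (h₂₁ : S.toBlocks₂₁ = 0) :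
    ¬IsUnit S := by
  obtain ⟨i⟩ := ‹Nonempty ι›
  rw [isUnit_iff_isUnit_det, det_eq_zero_of_column_eq_zero (Sum.inl i)]
  · exact not_isUnit_zero
  · rintro (j | j)
    · exact congrFun₂ h₁₁ j i
    · exact congrFun₂ h₂₁ j i

def Matrix.GeneralLinearGroup.blockDiag (g : GL ι R) (h : GL κ R) : GL (ι ⊕ κ) R where
  val := fromBlocks g 0 0 h
  inv := fromBlocks ↑g⁻¹ 0 0 ↑h⁻¹
  val_inv := by simp [fromBlocks_multiply]
  inv_val := by simp [fromBlocks_multiply]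

theorem Matrix.GeneralLinearGroup.blockDiag_one_mul_mul_transpose (g : GL κ R)
    (S : Matrix (ι ⊕ κ) (ι ⊕ κ) R) :
    (blockDiag (1 : GL ι R) g : Matrix (ι ⊕ κ) (ι ⊕ κ) R) * S *
        (blockDiag (1 : GL ι R) g : Matrix (ι ⊕ κ) (ι ⊕ κ) R)ᵀ =
      fromBlocks S.toBlocks₁₁ (S.toBlocks₁₂ * (g : Matrix κ κ R)ᵀ)
        ((g : Matrix κ κ R) * S.toBlocks₂₁) (g * S.toBlocks₂₂ * (g : Matrix κ κ R)ᵀ) := by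
  conv_lhs => rw [← S.fromBlocks_toBlocks]
  simp [blockDiag, fromBlocks_transpose, fromBlocks_multiply, Matrix.mul_assoc]

end Blocks

namespace InvertibleSymm

variable {ι κ R : Type*} [Fintype ι] [DecidableEq ι] [Fintype κ] [DecidableEq κ] [CommRing R]

def reindex (e : ι ≃ κ) : InvertibleSymm ι R ≃ InvertibleSymm κ R :=
  (Matrix.reindex e e).subtypeEquiv fun S => by
    refine and_congr ⟨fun h => h.submatrix _, fun h => ?_⟩ (isUnit_submatrix_equiv _ _).symm
    simpa using h.submatrix e

theorem card_congr (e : ι ≃ κ) :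
    Nat.card (InvertibleSymm ι R) = Nat.card (InvertibleSymm κ R) :=
  Nat.card_congr (reindex e)

def congruence (P : GL ι R) : InvertibleSymm ι R ≃ InvertibleSymm ι R where
  toFun S := ⟨P * S.1 * (P : Matrix ι ι R)ᵀ, S.2.1.mul_mul_transpose _,
    (P.isUnit.mul S.2.2).mul (isUnit_transpose _ |>.mpr P.isUnit)⟩
  invFun S := ⟨↑P⁻¹ * S.1 * (↑P⁻¹ : Matrix ι ι R)ᵀ, S.2.1.mul_mul_transpose _,
    ((P⁻¹).isUnit.mul S.2.2).mul (isUnit_transpose _ |>.mpr (P⁻¹).isUnit)⟩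
  left_inv S := by
    ext1
    simp [Matrix.mul_assoc, ← transpose_mul]
  right_inv S := by
    ext1
    simp [Matrix.mul_assoc, ← transpose_mul]

noncomputable def schurEquiv :
    {S : InvertibleSymm (ι ⊕ κ) R // IsUnit S.1.toBlocks₁₁} ≃
      InvertibleSymm ι R × Matrix κ ι R × InvertibleSymm κ R where
  toFun S :=
    (⟨S.1.1.toBlocks₁₁, S.1.2.1.toBlocks₁₁, S.2⟩, S.1.1.toBlocks₂₁,
      ⟨S.1.1.toBlocks₂₂ - S.1.1.toBlocks₂₁ * S.1.1.toBlocks₁₁⁻¹ * S.1.1.toBlocks₂₁ᵀ,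
        S.1.2.1.toBlocks₂₂.sub (S.1.2.1.toBlocks₁₁.inv.mul_mul_transpose _),
        (isUnit_fromBlocks_transpose_iff S.2 _ _).mp (S.1.2.1.fromBlocks_toBlocks ▸ S.1.2.2)⟩)
  invFun x :=
    ⟨⟨fromBlocks x.1.1 x.2.1ᵀ x.2.1 (x.2.2.1 + x.2.1 * x.1.1⁻¹ * x.2.1ᵀ),
      x.1.2.1.fromBlocks rfl (x.2.2.2.1.add (x.1.2.1.inv.mul_mul_transpose _)),
      by rw [isUnit_fromBlocks_transpose_iff x.1.2.2, add_sub_cancel_right]; exact x.2.2.2.2⟩,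
      by simpa using x.1.2.2⟩
  left_inv S := by
    ext1; ext1
    simpa using S.1.2.1.fromBlocks_toBlocks
  right_inv x := by
    ext <;> simp

theorem card_toBlocks₁₁_toBlocks₂₁ (P : Matrix ι ι R → Prop)
    (hP : ∀ A, A.IsSymm → P A → IsUnit A) (p : Matrix κ ι R → Prop) :
    Nat.card {S : InvertibleSymm (ι ⊕ κ) R // P S.1.toBlocks₁₁ ∧ p S.1.toBlocks₂₁} =
      Nat.card {A : InvertibleSymm ι R // P A.1} * Nat.card {C // p C} *
        Nat.card (InvertibleSymm κ R) := by
  calc _ = Nat.card {S : {S : InvertibleSymm (ι ⊕ κ) R // IsUnit S.1.toBlocks₁₁} //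
          P S.1.1.toBlocks₁₁ ∧ p S.1.1.toBlocks₂₁} :=
        Nat.card_congr
          (Equiv.subtypeSubtypeEquivSubtype fun {S} h => hP _ S.2.1.toBlocks₁₁ h.1).symm
    _ = Nat.card {x : InvertibleSymm ι R × Matrix κ ι R × InvertibleSymm κ R //
          P x.1.1 ∧ p x.2.1} :=
        Nat.card_congr (schurEquiv.subtypeEquiv fun _ => Iff.rfl)
    _ = Nat.card ({A : InvertibleSymm ι R // P A.1} × {C // p C} × InvertibleSymm κ R) :=
        Nat.card_congr <| (Equiv.subtypeProdEquivProd (p := fun A : InvertibleSymm ι R => P A.1)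
          (q := fun y : Matrix κ ι R × InvertibleSymm κ R => p y.1)).trans <|
          Equiv.prodCongr (Equiv.refl _) Equiv.prodSubtypeFstEquivSubtypeProd
    _ = _ := by rw [Nat.card_prod, Nat.card_prod, Nat.mul_assoc]

theorem card_toBlocks₂₁_eq_mul (g : GL κ R) (P : Matrix ι ι R → Prop) (B : Matrix κ ι R) :
    Nat.card {S : InvertibleSymm (ι ⊕ κ) R // P S.1.toBlocks₁₁ ∧ S.1.toBlocks₂₁ = B} =
      Nat.card {S : InvertibleSymm (ι ⊕ κ) R //
        P S.1.toBlocks₁₁ ∧ S.1.toBlocks₂₁ = (g : Matrix κ κ R) * B} := by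
  refine Nat.card_congr <|
    (congruence (GeneralLinearGroup.blockDiag (1 : GL ι R) g)).subtypeEquiv fun S => ?_
  simp only [congruence, Equiv.coe_fn_mk, GeneralLinearGroup.blockDiag_one_mul_mul_transpose,
    toBlocks_fromBlocks₁₁, toBlocks_fromBlocks₂₁]
  refine and_congr_right' ⟨fun h => congrArg _ h, fun h => ?_⟩
  simpa [← Matrix.mul_assoc] using congrArg ((↑g⁻¹ : Matrix κ κ R) * ·) h

theorem card_toBlocks₁₁_eq_zero_toBlocks₂₁_eq_one :
    Nat.card {A : InvertibleSymm (ι ⊕ ι) R // A.1.toBlocks₁₁ = 0 ∧ A.1.toBlocks₂₁ = 1} =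
      Nat.card {D : Matrix ι ι R // D.IsSymm} :=
  Nat.card_congr
    { toFun A := ⟨A.1.1.toBlocks₂₂, A.1.2.1.toBlocks₂₂⟩
      invFun D := ⟨⟨fromBlocks 0 1 1 D, isSymm_zero.fromBlocks transpose_one D.2,
        isUnit_fromBlocks_zero_one _⟩, by simp⟩
      left_inv A := by
        ext1; ext1
        simpa [A.2.1, A.2.2] using A.1.2.1.fromBlocks_toBlocks
      right_inv D := by simp }

end InvertibleSymm

theorem prod_Icc_parity_succ_succ (q n : ℕ) (hq : 1 ≤ q) :
    ∏ i ∈ Finset.Icc 1 (n + 2), (if i % 2 = 1 then q ^ i - 1 else q ^ i) =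
      (q - 1) *
          (q ^ (n + 1) * ∏ i ∈ Finset.Icc 1 (n + 1), (if i % 2 = 1 then q ^ i - 1 else q ^ i)) +
        (q ^ (n + 1) - 1) *
          (q * (q ^ n * ∏ i ∈ Finset.Icc 1 n, (if i % 2 = 1 then q ^ i - 1 else q ^ i))) := by
  rw [Finset.prod_Icc_succ_top (by omega : 1 ≤ n + 2),
    Finset.prod_Icc_succ_top (by omega : 1 ≤ n + 1)]
  have h₁ : 1 ≤ q ^ (n + 1) := Nat.one_le_pow _ _ hq
  have h₂ : 1 ≤ q ^ (n + 2) := Nat.one_le_pow _ _ hq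
  rcases Nat.even_or_odd n with ⟨k, rfl⟩ | ⟨k, rfl⟩
  · rw [if_pos (by omega), if_neg (by omega)]
    zify [hq, h₁]
    ring
  · rw [if_neg (by omega), if_pos (by omega)]
    zify [hq, h₁, h₂]
    ring

section FiniteField

variable {κ ν F : Type*} [Fintype κ] [DecidableEq κ] [Fintype ν] [DecidableEq ν] [Field F]

theorem Matrix.exists_GL_mulVec_eq {v w : κ → F} (hv : v ≠ 0) (hw : w ≠ 0) :
    ∃ g : GL κ F, (g : Matrix κ κ F) *ᵥ v = w := by
  obtain ⟨e, he⟩ := Submodule.exists_linearEquiv_restrict_eq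
    ((LinearEquiv.toSpanNonzeroSingleton F _ v hv).symm ≪≫ₗ
      LinearEquiv.toSpanNonzeroSingleton F _ w hw)
  have hev := he (LinearEquiv.toSpanNonzeroSingleton F _ v hv 1)
  rw [LinearEquiv.trans_apply, LinearEquiv.symm_apply_apply,
    LinearEquiv.toSpanNonzeroSingleton_one, LinearEquiv.toSpanNonzeroSingleton_one] at hev
  change w = e v at hev
  refine ⟨GeneralLinearGroup.toLin.symm
    ((LinearMap.GeneralLinearGroup.generalLinearEquiv F _).symm e), ?_⟩
  rw [hev, ← Matrix.mulVecLin_apply, ← GeneralLinearGroup.coe_toLin, MulEquiv.apply_symm_apply]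
  rfl

theorem Matrix.exists_GL_mul_eq {B B' : Matrix κ Unit F} (hB : B ≠ 0) (hB' : B' ≠ 0) :
    ∃ g : GL κ F, (g : Matrix κ κ F) * B = B' := by
  have col_ne_zero {B : Matrix κ Unit F} (hB : B ≠ 0) : (fun k => B k ()) ≠ 0 :=
    fun h => hB (ext fun k _ => congrFun h k)
  obtain ⟨g, hg⟩ := exists_GL_mulVec_eq (col_ne_zero hB) (col_ne_zero hB')
  exact ⟨g, ext fun k _ => by simpa [mulVec, dotProduct, mul_apply] using congrFun hg k⟩

theorem Matrix.not_isUnit_iff_eq_zero_of_unit (A : Matrix Unit Unit F) : ¬IsUnit A ↔ A = 0 := by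
  rw [← isUnit_map_iff (uniqueRingEquiv : Matrix Unit Unit F ≃+* F), isUnit_iff_ne_zero, not_not,
    map_eq_zero_iff _ (uniqueRingEquiv : Matrix Unit Unit F ≃+* F).injective]

namespace InvertibleSymm

variable [Fintype F]

theorem card_unit : Nat.card (InvertibleSymm Unit F) = Fintype.card F - 1 := by
  rw [← Nat.card_eq_fintype_card, ← Nat.card_units F]
  exact Nat.card_congr <| ((Units.subtypeEquivSubtypeIsUnit IsSymm).symm.trans
    (Equiv.subtypeUnivEquiv fun u => isSymm_of_unit u.1)).trans
      (Units.mapEquiv uniqueRingEquiv.toMulEquiv).toEquiv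

theorem card_isUnit_toBlocks₁₁ :
    Nat.card {S : InvertibleSymm (Unit ⊕ κ) F // IsUnit S.1.toBlocks₁₁} =
      (Fintype.card F - 1) * (Fintype.card F ^ Fintype.card κ * Nat.card (InvertibleSymm κ F)) := by
  rw [Nat.card_congr schurEquiv, Nat.card_prod, Nat.card_prod, card_unit, Nat.card_matrix_unit]

theorem card_toBlocks₁₁_eq_zero {B₀ : Matrix κ Unit F} (hB₀ : B₀ ≠ 0) :
    Nat.card {S : InvertibleSymm (Unit ⊕ κ) F // S.1.toBlocks₁₁ = 0} =
      (Fintype.card F ^ Fintype.card κ - 1) *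
        Nat.card {S : InvertibleSymm (Unit ⊕ κ) F // S.1.toBlocks₁₁ = 0 ∧ S.1.toBlocks₂₁ = B₀} := by
  classical
  have fiber_zero :
      Nat.card {S : InvertibleSymm (Unit ⊕ κ) F // S.1.toBlocks₁₁ = 0 ∧ S.1.toBlocks₂₁ = 0} = 0 :=
    have : IsEmpty
        {S : InvertibleSymm (Unit ⊕ κ) F // S.1.toBlocks₁₁ = 0 ∧ S.1.toBlocks₂₁ = 0} :=
      ⟨fun S => not_isUnit_of_toBlocks₁₁_eq_zero_of_toBlocks₂₁_eq_zero S.2.1 S.2.2 S.1.2.2⟩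
    Nat.card_of_isEmpty
  have fiber_ne_zero {B : Matrix κ Unit F} (hB : B ≠ 0) :
      Nat.card {S : InvertibleSymm (Unit ⊕ κ) F // S.1.toBlocks₁₁ = 0 ∧ S.1.toBlocks₂₁ = B} =
        Nat.card {S : InvertibleSymm (Unit ⊕ κ) F // S.1.toBlocks₁₁ = 0 ∧ S.1.toBlocks₂₁ = B₀} := by
    obtain ⟨g, rfl⟩ := exists_GL_mul_eq hB hB₀
    exact card_toBlocks₂₁_eq_mul g (· = 0) B
  rw [Nat.card_subtype_eq_sum_card_fiber _ fun S : InvertibleSymm (Unit ⊕ κ) F => S.1.toBlocks₂₁,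
    Fintype.sum_eq_add_sum_compl 0, fiber_zero, zero_add,
    Finset.sum_congr rfl fun B hB => fiber_ne_zero (by simpa using hB), Finset.sum_const,
    Finset.card_compl, Finset.card_singleton, smul_eq_mul, ← Nat.card_eq_fintype_card,
    Nat.card_matrix_unit]

theorem card_toBlocks₁₁_eq_zero_toBlocks₂₁_eq_fromRows :
    Nat.card {S : InvertibleSymm (Unit ⊕ (Unit ⊕ ν)) F //
        S.1.toBlocks₁₁ = 0 ∧ S.1.toBlocks₂₁ = fromRows 1 0} =
      Fintype.card F * (Fintype.card F ^ Fintype.card ν * Nat.card (InvertibleSymm ν F)) := by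
  calc _ = Nat.card {T : InvertibleSymm ((Unit ⊕ Unit) ⊕ ν) F //
          (T.1.toBlocks₁₁.toBlocks₁₁ = 0 ∧ T.1.toBlocks₁₁.toBlocks₂₁ = 1) ∧
            T.1.toBlocks₂₁.toCols₁ = 0} :=
        Nat.card_congr <| (reindex (Equiv.sumAssoc Unit Unit ν).symm).subtypeEquiv fun S => by
          simp [reindex, ← Matrix.ext_iff, Matrix.toBlocks₁₁, Matrix.toBlocks₂₁, Sum.forall,
            and_assoc]
    _ = Nat.card {A : InvertibleSymm (Unit ⊕ Unit) F //
          A.1.toBlocks₁₁ = 0 ∧ A.1.toBlocks₂₁ = 1} *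
        Nat.card {C : Matrix ν (Unit ⊕ Unit) F // C.toCols₁ = 0} *
          Nat.card (InvertibleSymm ν F) := by
      refine card_toBlocks₁₁_toBlocks₂₁ (ι := Unit ⊕ Unit) (R := F)
        (fun A => A.toBlocks₁₁ = 0 ∧ A.toBlocks₂₁ = 1) (fun A hA h => ?_)
        (fun C : Matrix ν _ F => C.toCols₁ = 0)
      rw [← hA.fromBlocks_toBlocks, h.1, h.2, transpose_one]
      exact isUnit_fromBlocks_zero_one _
    _ = _ := by
      rw [card_toBlocks₁₁_eq_zero_toBlocks₂₁_eq_one, card_toCols₁_eq_zero, Nat.card_matrix_unit,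
        Nat.card_congr (Equiv.subtypeUnivEquiv isSymm_of_unit), Nat.card_matrix_unit,
        Fintype.card_unit, pow_one, Nat.mul_assoc]

theorem card_sum_unit :
    Nat.card (InvertibleSymm (Unit ⊕ κ) F) =
      (Fintype.card F - 1) * (Fintype.card F ^ Fintype.card κ * Nat.card (InvertibleSymm κ F)) +
        Nat.card {S : InvertibleSymm (Unit ⊕ κ) F // S.1.toBlocks₁₁ = 0} := by
  classical
  rw [← Nat.card_congr (Equiv.sumCompl fun S : InvertibleSymm (Unit ⊕ κ) F =>
    IsUnit S.1.toBlocks₁₁), Nat.card_sum, card_isUnit_toBlocks₁₁]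
  simp_rw [not_isUnit_iff_eq_zero_of_unit]

theorem card_sum_unit_sum_unit :
    Nat.card (InvertibleSymm (Unit ⊕ (Unit ⊕ ν)) F) =
      (Fintype.card F - 1) *
          (Fintype.card F ^ (Fintype.card ν + 1) * Nat.card (InvertibleSymm (Unit ⊕ ν) F)) +
        (Fintype.card F ^ (Fintype.card ν + 1) - 1) *
          (Fintype.card F * (Fintype.card F ^ Fintype.card ν * Nat.card (InvertibleSymm ν F))) := by
  have fromRows_ne_zero : fromRows (1 : Matrix Unit Unit F) (0 : Matrix ν Unit F) ≠ 0 :=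
    fun h => one_ne_zero (congrFun₂ h (Sum.inl ()) ())
  rw [card_sum_unit, card_toBlocks₁₁_eq_zero fromRows_ne_zero,
    card_toBlocks₁₁_eq_zero_toBlocks₂₁_eq_fromRows, Fintype.card_sum, Fintype.card_unit,
    Nat.add_comm 1]

theorem card_fin_eq_prod : ∀ n : ℕ, Nat.card (InvertibleSymm (Fin n) F) =
    ∏ i ∈ Finset.Icc 1 n, (if i % 2 = 1 then Fintype.card F ^ i - 1 else Fintype.card F ^ i)
  | 0 => Nat.card_eq_one_iff_unique.mpr ⟨inferInstance, ⟨⟨1, isSymm_one, isUnit_one⟩⟩⟩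
  | 1 => by
    rw [card_congr (Fintype.equivOfCardEq (α := Fin 1) (β := Unit) rfl), card_unit]
    simp
  | n + 2 => by
    rw [card_congr (Fintype.equivOfCardEq (β := Unit ⊕ (Unit ⊕ Fin n)) (by simp; omega)),
      card_sum_unit_sum_unit,
      card_congr (Fintype.equivOfCardEq (β := Fin (n + 1)) (by simp; omega)),
      card_fin_eq_prod (n + 1), card_fin_eq_prod n, Fintype.card_fin,
      prod_Icc_parity_succ_succ _ _ Fintype.card_pos]

end InvertibleSymm

end FiniteField

theorem mul_tau_eq_one_iff {n : ℕ} {F : Type} [Field F] (g : GL (Fin n) F) :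
    g * tau g = 1 ↔ (g : Matrix (Fin n) (Fin n) F).IsSymm := by
  rw [mul_eq_one_iff_eq_inv, Units.ext_iff]
  exact eq_comm

theorem stmt3_general (q n : ℕ)
    (F : Type) [Field F] [Fintype F] (hF : Fintype.card F = q) :
    Nat.card {g : GL (Fin n) F // g * tau g = 1} =
      ∏ i ∈ Finset.Icc 1 n, (if i % 2 = 1 then q ^ i - 1 else q ^ i) := by
  subst hF
  rw [Nat.card_congr ((Equiv.subtypeEquivRight mul_tau_eq_one_iff).trans
    (Units.subtypeEquivSubtypeIsUnit _)), InvertibleSymm.card_fin_eq_prod]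

theorem stmt3 (q n : ℕ) (hq : IsPrimePow q) (hn : 1 ≤ n)
    (F : Type) [Field F] [Fintype F] (hF : Fintype.card F = q) :
    Nat.card {g : GL (Fin n) F // g * tau g = 1} =
      ∏ i ∈ Finset.Icc 1 n, (if i % 2 = 1 then q ^ i - 1 else q ^ i) :=
  stmt3_general q n F hF
end

section
/- Let q be a real number with q ≥ 2 and let λ be a partition in which every even part occurs with even multiplicity. Then q^{n(λ) + (|λ| - o(λ))/2} · ∏_{i≥1} ∏_{j=1}^{⌊m_i(λ)/2⌋} (1 - q^{-2j}) ≥ q^{⌊|λ|/2⌋} · (1 - 1/q² - 1/q⁴). (Note |λ| - o(λ) is even, so the exponent is an integer.) -/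
/-- The partition statistic `n(μ) = ∑_i (i-1) μ_i` (parts in decreasing order). -/
def partN (μ : Multiset ℕ) : ℕ :=
  (((μ.sort (· ≤ ·)).reverse).zipIdx.map (fun p => p.2 * p.1)).sum

/-- The number of odd parts of a partition, counted with multiplicity. -/
def partO (μ : Multiset ℕ) : ℕ := Multiset.card (μ.filter (fun i => i % 2 = 1))

/-!
Write `k` for the number of parts of `λ` and `T = ∑ᵢ ⌊mᵢ/2⌋ ≤ k/2` for its number of pairs of
equal parts. Every factor of the double product is at least `1 - q⁻²`, so the product is at least
`(1 - q⁻²)^T`. Since `n(λ) ≥ 0 + 1 + ⋯ + (k-1) ≥ k - 1` and `|λ| ≡ o(λ) mod 2`, the exponent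
`e = n(λ) + (|λ| - o(λ))/2` satisfies `⌊|λ|/2⌋ ≤ e` and `⌊|λ|/2⌋ + T ≤ e + 1`. For `T = 0` this is
enough; for `T ≥ 1` we get `q^e (1 - q⁻²)^T ≥ q^{⌊|λ|/2⌋} (1 - q⁻²) (q - q⁻¹)^{T-1}`, and
`q - q⁻¹ ≥ 1` for `q ≥ 2`.
-/

lemma partO_mod_two (s : Multiset ℕ) : partO s % 2 = s.sum % 2 := by
  induction s using Multiset.induction with
  | empty => simp [partO]
  | cons a s ih =>
    simp only [partO, Multiset.filter_cons, Multiset.sum_cons, Multiset.card_add] at *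
    split_ifs <;> simp only [Multiset.card_singleton, Multiset.card_zero] <;> omega

lemma sum_range_card_le_partN {μ : Multiset ℕ} (hμ : ∀ a ∈ μ, 1 ≤ a) :
    ∑ i ∈ Finset.range (Multiset.card μ), i ≤ partN μ := by
  unfold partN
  set l := (μ.sort (· ≤ ·)).reverse
  have hl : l.length = Multiset.card μ := by simp [l]
  have hindex : (l.zipIdx.map Prod.snd).sum ≤ (l.zipIdx.map fun p => p.2 * p.1).sum := by
    refine List.sum_le_sum fun p hp => Nat.le_mul_of_pos_right _ (hμ p.1 ?_)
    simpa [l] using List.fst_mem_of_mem_zipIdx hp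
  rw [List.zipIdx_map_snd, ← List.range_eq_range', hl] at hindex
  simpa [Finset.sum, Finset.range, Multiset.range] using hindex

lemma card_le_partN_add_one {μ : Multiset ℕ} (hμ : ∀ a ∈ μ, 1 ≤ a) :
    Multiset.card μ ≤ partN μ + 1 := by
  have h := sum_range_card_le_partN hμ
  rcases hk : Multiset.card μ with _ | k
  · exact Nat.zero_le _
  · rw [hk, Finset.sum_range_succ] at h
    omega

lemma two_mul_sum_count_div_two_le_card {α : Type*} [DecidableEq α] {s : Finset α}
    {m : Multiset α} (hm : ∀ a ∈ m, a ∈ s) :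
    2 * ∑ i ∈ s, m.count i / 2 ≤ Multiset.card m := by
  rw [← Multiset.sum_count_eq_card hm, Finset.mul_sum]
  exact Finset.sum_le_sum fun i _ => Nat.mul_div_le _ _

section OrderedRing

variable {R : Type*} [CommRing R] [LinearOrder R] [IsStrictOrderedRing R] {y : R}

lemma one_sub_pow_le_prod_Icc (hy0 : 0 ≤ y) (hy1 : y ≤ 1) (m : ℕ) :
    (1 - y) ^ m ≤ ∏ j ∈ Finset.Icc 1 m, (1 - y ^ j) := by
  calc (1 - y) ^ m = ∏ _j ∈ Finset.Icc 1 m, (1 - y) := by simp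
    _ ≤ ∏ j ∈ Finset.Icc 1 m, (1 - y ^ j) := by
      refine Finset.prod_le_prod (fun _ _ => sub_nonneg.2 hy1) fun j hj => ?_
      have hj : j ≠ 0 := Nat.one_le_iff_ne_zero.1 (Finset.mem_Icc.1 hj).1
      exact sub_le_sub_left (pow_le_of_le_one hy0 hy1 hj) 1

lemma one_sub_pow_sum_le_prod_prod_Icc {ι : Type*} (hy0 : 0 ≤ y) (hy1 : y ≤ 1)
    (s : Finset ι) (f : ι → ℕ) :
    (1 - y) ^ ∑ i ∈ s, f i ≤ ∏ i ∈ s, ∏ j ∈ Finset.Icc 1 (f i), (1 - y ^ j) := by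
  rw [← Finset.prod_pow_eq_pow_sum]
  exact Finset.prod_le_prod (fun _ _ => pow_nonneg (sub_nonneg.2 hy1) _)
    fun i _ => one_sub_pow_le_prod_Icc hy0 hy1 (f i)

end OrderedRing

lemma pow_mul_one_sub_le {q : ℝ} (hq : 2 ≤ q) {a b T : ℕ} (hab : a ≤ b) (hT : a + T ≤ b + 1) :
    q ^ a * (1 - q⁻¹ ^ 2 - q⁻¹ ^ 4) ≤ q ^ b * (1 - q⁻¹ ^ 2) ^ T := by
  have hq1 : 1 ≤ q := by linarith
  have hx4 : 0 ≤ q⁻¹ ^ 4 := by positivity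
  have hx2 : q⁻¹ ^ 2 ≤ 1 := pow_le_one₀ (by positivity) (inv_le_one_of_one_le₀ hq1)
  rcases T with _ | t
  · calc q ^ a * (1 - q⁻¹ ^ 2 - q⁻¹ ^ 4) ≤ q ^ a := by
          nlinarith [pow_pos (by positivity : 0 < q) a, sq_nonneg q⁻¹]
      _ ≤ q ^ b * (1 - q⁻¹ ^ 2) ^ 0 := by simpa using pow_le_pow_right₀ hq1 hab
  · have hgrowth : 1 ≤ q * (1 - q⁻¹ ^ 2) := by
      have : q * (1 - q⁻¹ ^ 2) = q - q⁻¹ := by field_simp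
      rw [this]
      linarith [inv_anti₀ (by norm_num) hq]
    calc q ^ a * (1 - q⁻¹ ^ 2 - q⁻¹ ^ 4)
        ≤ q ^ a * (1 - q⁻¹ ^ 2) * (q * (1 - q⁻¹ ^ 2)) ^ t := by
          refine (mul_le_mul_of_nonneg_left (by linarith) (by positivity)).trans
            (le_mul_of_one_le_right ?_ (one_le_pow₀ hgrowth))
          exact mul_nonneg (by positivity) (by linarith)
      _ = q ^ (a + t) * (1 - q⁻¹ ^ 2) ^ (t + 1) := by rw [mul_pow]; ring
      _ ≤ q ^ b * (1 - q⁻¹ ^ 2) ^ (t + 1) :=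
          mul_le_mul_of_nonneg_right (pow_le_pow_right₀ hq1 (by omega))
            (pow_nonneg (by linarith) _)

theorem stmt12_general (q : ℝ) (hq : 2 ≤ q) (N : ℕ) (lam : Nat.Partition N) :
    q ^ (partN lam.parts + (N - partO lam.parts) / 2) *
      ∏ i ∈ Finset.Icc 1 N, ∏ j ∈ Finset.Icc 1 (lam.parts.count i / 2),
        (1 - q⁻¹ ^ (2 * j)) ≥
    q ^ (N / 2) * (1 - 1 / q ^ 2 - 1 / q ^ 4) := by
  have hpos : ∀ a ∈ lam.parts, 1 ≤ a := fun a ha => lam.parts_pos ha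
  have hmem : ∀ a ∈ lam.parts, a ∈ Finset.Icc 1 N :=
    fun a ha => Finset.mem_Icc.2 ⟨hpos a ha, lam.le_of_mem_parts ha⟩
  have hpairs := two_mul_sum_count_div_two_le_card hmem
  have hpartN := card_le_partN_add_one hpos
  have hodd : partO lam.parts ≤ Multiset.card lam.parts :=
    Multiset.card_le_card (Multiset.filter_le _ _)
  have hcard : Multiset.card lam.parts ≤ N := by
    simpa [lam.parts_sum] using Multiset.card_nsmul_le_sum hpos
  have hparity : partO lam.parts % 2 = N % 2 := by rw [partO_mod_two, lam.parts_sum]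
  have hx0 : (0 : ℝ) ≤ q⁻¹ ^ 2 := by positivity
  have hx1 : q⁻¹ ^ 2 ≤ 1 := pow_le_one₀ (by positivity) (inv_le_one_of_one_le₀ (by linarith))
  simp_rw [ge_iff_le, one_div, ← inv_pow, pow_mul]
  calc q ^ (N / 2) * (1 - q⁻¹ ^ 2 - q⁻¹ ^ 4)
      ≤ q ^ (partN lam.parts + (N - partO lam.parts) / 2) *
          (1 - q⁻¹ ^ 2) ^ ∑ i ∈ Finset.Icc 1 N, lam.parts.count i / 2 :=
        pow_mul_one_sub_le hq (by omega) (by omega)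
    _ ≤ _ := mul_le_mul_of_nonneg_left
        (one_sub_pow_sum_le_prod_prod_Icc hx0 hx1 _ _) (by positivity)

theorem stmt12 (q : ℝ) (hq : 2 ≤ q) (N : ℕ) (lam : Nat.Partition N)
    (hlam : ∀ i, i % 2 = 0 → lam.parts.count i % 2 = 0) :
    q ^ (partN lam.parts + (N - partO lam.parts) / 2) *
      ∏ i ∈ Finset.Icc 1 N, ∏ j ∈ Finset.Icc 1 (lam.parts.count i / 2),
        (1 - q⁻¹ ^ (2 * j)) ≥
    q ^ (N / 2) * (1 - 1 / q ^ 2 - 1 / q ^ 4) :=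
  stmt12_general q hq N lam
end

section
/- Let q be a real number with q ≥ √2. Then 1 - 1/q - 1/q² + 1/q⁵ + 1/q⁷ - 1/q¹² - 1/q¹⁵ < ∏_{i=1}^{∞} (1 - 1/q^i) < 1 - 1/q, where the middle expression is the convergent infinite product over all integers i ≥ 1. -/
/-!
By Euler's pentagonal number theorem, for `0 ≤ x < 1`,
`∏ (1 - x^(n+1)) = ∑_k (-1)^k (x^(k(3k+1)/2) - x^((k+1)(3k+2)/2))`, and the `k`-th term is at most
`x^(k(3k+1)/2)` in absolute value, so cutting the series after `m` terms costs at most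
`x^(m(3m+1)/2) / (1 - x)`. Cutting after two terms gives the upper bound and after five the lower
bound: for `x = 1/q ≤ 1/√2` these errors, `x^7 / (1 - x)` and `x^40 / (1 - x)`, are smaller than the
margins `x^2 - x^5` and `x^22 + x^26 - x^35`.
-/

open Filter Topology

theorem pentagonal_neg_add_le (n j : ℕ) :
    pentagonal (-(n : ℤ)) + j ≤ pentagonal (-((n + j : ℕ) : ℤ)) := by
  have h := two_mul_natCast_pentagonal_neg (n : ℤ)
  have h' := two_mul_natCast_pentagonal_neg ((n + j : ℕ) : ℤ)
  push_cast at h'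
  zify
  nlinarith [mul_nonneg (Int.natCast_nonneg n) (Int.natCast_nonneg j), sq_nonneg (j : ℤ)]

namespace Real

variable {x : ℝ}

theorem multipliable_one_sub_pow_add_add_one (hx : |x| < 1) (k : ℕ) :
    Multipliable fun n ↦ 1 - x ^ (n + k + 1) := by
  have := ((summable_geometric_of_abs_lt_one hx).mul_left (x ^ (k + 1))).neg
  simpa only [sub_eq_add_neg, pow_add, add_assoc, mul_comm] using
    Real.multipliable_one_add_of_summable this

theorem prod_one_sub_pow_mem_Icc (hx0 : 0 ≤ x) (hx1 : x ≤ 1) (s : Finset ℕ) (e : ℕ → ℕ) :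
    ∏ i ∈ s, (1 - x ^ e i) ∈ Set.Icc 0 1 :=
  have h i : 0 ≤ 1 - x ^ e i := sub_nonneg.2 (pow_le_one₀ hx0 hx1)
  ⟨Finset.prod_nonneg fun i _ ↦ h i,
    Finset.prod_le_one (fun i _ ↦ h i) fun _ _ ↦ sub_le_self _ (pow_nonneg hx0 _)⟩

theorem pow_mul_prod_one_sub_pow_mem_Icc (hx0 : 0 ≤ x) (hx1 : x ≤ 1) (k n : ℕ) :
    x ^ ((k + 1) * n) * ∏ i ∈ Finset.range (n + 1), (1 - x ^ (k + i + 1)) ∈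
      Set.Icc 0 (x ^ n) := by
  obtain ⟨h0, h1⟩ := prod_one_sub_pow_mem_Icc hx0 hx1 (Finset.range (n + 1)) (k + · + 1)
  refine ⟨mul_nonneg (pow_nonneg hx0 _) h0, ?_⟩
  calc _ ≤ x ^ ((k + 1) * n) := mul_le_of_le_one_right (pow_nonneg hx0 _) h1
    _ ≤ x ^ n := pow_le_pow_of_le_one hx0 hx1 (Nat.le_mul_of_pos_left n k.succ_pos)

theorem summable_pow_mul_prod_one_sub_pow (hx0 : 0 ≤ x) (hx1 : x < 1) (k : ℕ) :
    Summable fun n ↦ x ^ ((k + 1) * n) * ∏ i ∈ Finset.range (n + 1), (1 - x ^ (k + i + 1)) :=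
  .of_nonneg_of_le (fun n ↦ (pow_mul_prod_one_sub_pow_mem_Icc hx0 hx1.le k n).1)
    (fun n ↦ (pow_mul_prod_one_sub_pow_mem_Icc hx0 hx1.le k n).2)
    (summable_geometric_of_lt_one hx0 hx1)

theorem tsum_pow_mul_prod_one_sub_pow_mem_Icc (hx0 : 0 ≤ x) (hx1 : x < 1) (k : ℕ) :
    ∑' n, x ^ ((k + 1) * n) * ∏ i ∈ Finset.range (n + 1), (1 - x ^ (k + i + 1)) ∈
      Set.Icc 0 (1 - x)⁻¹ := by
  have hb n := pow_mul_prod_one_sub_pow_mem_Icc hx0 hx1.le k n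
  refine ⟨tsum_nonneg fun n ↦ (hb n).1, ?_⟩
  rw [← tsum_geometric_of_lt_one hx0 hx1]
  exact (summable_pow_mul_prod_one_sub_pow hx0 hx1 k).tsum_le_tsum (fun n ↦ (hb n).2)
    (summable_geometric_of_lt_one hx0 hx1)

theorem tendsto_pentagonal_remainder (hx0 : 0 ≤ x) (hx1 : x < 1) :
    Tendsto (fun k ↦ (-1) ^ (k + 1) * x ^ ((k + 1) * (3 * k + 4) / 2) *
      ∑' n, x ^ ((k + 1) * n) * ∏ i ∈ Finset.range (n + 1), (1 - x ^ (k + i + 1)))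
      atTop (𝓝 0) := by
  have hgeom := (tendsto_pow_atTop_nhds_zero_of_lt_one hx0 hx1).mul_const (1 - x)⁻¹
  rw [zero_mul] at hgeom
  refine squeeze_zero_norm (fun k ↦ ?_) hgeom
  obtain ⟨hs0, hs1⟩ := tsum_pow_mul_prod_one_sub_pow_mem_Icc hx0 hx1 k
  have hexp : k ≤ (k + 1) * (3 * k + 4) / 2 := by
    rw [Nat.le_div_iff_mul_le two_pos]; nlinarith
  rw [norm_mul, norm_mul, norm_pow, norm_neg, norm_one, one_pow, one_mul,
    norm_of_nonneg (pow_nonneg hx0 _), norm_of_nonneg hs0]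
  exact mul_le_mul (pow_le_pow_of_le_one hx0 hx1.le hexp) hs1 hs0 (pow_nonneg hx0 _)

theorem abs_pentagonal_term_le (hx0 : 0 ≤ x) (hx1 : x ≤ 1) (k : ℕ) :
    |(-1) ^ k * (x ^ pentagonal (-(k : ℤ)) - x ^ pentagonal (k + 1))| ≤
      x ^ pentagonal (-(k : ℤ)) := by
  have hle := pow_le_pow_of_le_one hx0 hx1
    (pentagonal_neg_lt_pentagonal_add_one (Int.natCast_nonneg k)).le
  rw [abs_mul, abs_pow, abs_neg, abs_one, one_pow, one_mul, abs_of_nonneg (sub_nonneg.2 hle)]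
  exact sub_le_self _ (pow_nonneg hx0 _)

theorem pow_pentagonal_neg_add_le (hx0 : 0 ≤ x) (hx1 : x ≤ 1) (m k : ℕ) :
    x ^ pentagonal (-((k + m : ℕ) : ℤ)) ≤ x ^ pentagonal (-(m : ℤ)) * x ^ k := by
  rw [← pow_add, add_comm k m]
  exact pow_le_pow_of_le_one hx0 hx1 (pentagonal_neg_add_le m k)

theorem summable_pow_pentagonal_neg_add (hx0 : 0 ≤ x) (hx1 : x < 1) (m : ℕ) :
    Summable fun k : ℕ ↦ x ^ pentagonal (-((k + m : ℕ) : ℤ)) :=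
  .of_nonneg_of_le (fun _ ↦ pow_nonneg hx0 _) (pow_pentagonal_neg_add_le hx0 hx1.le m)
    ((summable_geometric_of_lt_one hx0 hx1).mul_left _)

theorem tsum_pow_pentagonal_neg_add_le (hx0 : 0 ≤ x) (hx1 : x < 1) (m : ℕ) :
    ∑' k : ℕ, x ^ pentagonal (-((k + m : ℕ) : ℤ)) ≤ x ^ pentagonal (-(m : ℤ)) * (1 - x)⁻¹ := by
  have hgeom := (hasSum_geometric_of_lt_one hx0 hx1).mul_left (x ^ pentagonal (-(m : ℤ)))
  exact (summable_pow_pentagonal_neg_add hx0 hx1 m).tsum_le_tsum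
    (pow_pentagonal_neg_add_le hx0 hx1.le m) hgeom.summable |>.trans_eq hgeom.tsum_eq

theorem summable_pentagonal_terms (hx0 : 0 ≤ x) (hx1 : x < 1) :
    Summable fun k : ℕ ↦ (-1) ^ k * (x ^ pentagonal (-(k : ℤ)) - x ^ pentagonal (k + 1)) :=
  .of_norm_bounded (summable_pow_pentagonal_neg_add hx0 hx1 0)
    fun k ↦ abs_pentagonal_term_le hx0 hx1.le k

theorem tprod_one_sub_pow_eq_tsum_pentagonal (hx0 : 0 ≤ x) (hx1 : x < 1) :
    ∏' n, (1 - x ^ (n + 1)) =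
      ∑' k : ℕ, (-1) ^ k * (x ^ pentagonal (-(k : ℤ)) - x ^ pentagonal (k + 1)) :=
  Pentagonal.tprod_one_sub_pow (tendsto_pow_atTop_nhds_zero_of_lt_one hx0 hx1)
    (summable_pow_mul_prod_one_sub_pow hx0 hx1)
    (multipliable_one_sub_pow_add_add_one (abs_lt.2 ⟨by linarith, hx1⟩))
    (summable_pentagonal_terms hx0 hx1) (tendsto_pentagonal_remainder hx0 hx1)

theorem abs_tprod_one_sub_pow_sub_sum_pentagonal_le (hx0 : 0 ≤ x) (hx1 : x < 1) (m : ℕ) :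
    |∏' n, (1 - x ^ (n + 1)) -
      ∑ k ∈ Finset.range m, (-1) ^ k * (x ^ pentagonal (-(k : ℤ)) - x ^ pentagonal (k + 1))| ≤
      x ^ pentagonal (-(m : ℤ)) * (1 - x)⁻¹ := by
  rw [tprod_one_sub_pow_eq_tsum_pentagonal hx0 hx1,
    ← (summable_pentagonal_terms hx0 hx1).sum_add_tsum_nat_add m, add_sub_cancel_left]
  exact (tsum_of_norm_bounded (E := ℝ) (summable_pow_pentagonal_neg_add hx0 hx1 m).hasSum
    fun k ↦ abs_pentagonal_term_le hx0 hx1.le (k + m)).trans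
    (tsum_pow_pentagonal_neg_add_le hx0 hx1 m)

theorem tprod_one_sub_pow_mem_Ioo (hx0 : 0 < x) (hx2 : x ^ 2 ≤ 1 / 2) :
    ∏' n, (1 - x ^ (n + 1)) ∈
      Set.Ioo (1 - x - x ^ 2 + x ^ 5 + x ^ 7 - x ^ 12 - x ^ 15) (1 - x) := by
  have hx : x < 5 / 7 := by nlinarith
  have hinv : (1 - x)⁻¹ < 7 / 2 := by
    rw [inv_lt_comm₀ (by linarith) (by norm_num)]; linarith
  have hinv0 : 0 < (1 - x)⁻¹ := inv_pos.2 (by linarith)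
  have hlow := (abs_sub_le_iff.1
    (abs_tprod_one_sub_pow_sub_sum_pentagonal_le hx0.le (by linarith) 5)).2
  have hup := (abs_sub_le_iff.1
    (abs_tprod_one_sub_pow_sub_sum_pentagonal_le hx0.le (by linarith) 2)).1
  simp [Finset.sum_range_succ, pentagonal_def] at hlow hup
  have hlow_margin : x ^ 35 + x ^ 40 * (1 - x)⁻¹ < x ^ 22 + x ^ 26 := by
    have h13 : x ^ 13 ≤ 1 / 64 := by
      calc x ^ 13 = x * (x ^ 2) ^ 6 := by ring
        _ ≤ 1 * (1 / 2) ^ 6 := by gcongr; linarith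
        _ = 1 / 64 := by norm_num
    have h18 : x ^ 18 ≤ 1 / 512 := by
      calc x ^ 18 = (x ^ 2) ^ 9 := by ring
        _ ≤ (1 / 2) ^ 9 := by gcongr
        _ = 1 / 512 := by norm_num
    have : x ^ 13 + x ^ 18 * (1 - x)⁻¹ < 1 := by nlinarith
    nlinarith [pow_pos hx0 22, pow_pos hx0 26]
  have hup_margin : x ^ 5 + x ^ 7 * (1 - x)⁻¹ < x ^ 2 := by
    have h3 : x ^ 3 < 5 / 14 := by nlinarith
    have h5 : x ^ 5 ≤ 5 / 28 := by nlinarith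
    have : x ^ 3 + x ^ 5 * (1 - x)⁻¹ < 1 := by nlinarith
    nlinarith [pow_pos hx0 2]
  constructor <;> linarith

end Real

theorem stmt14 (q : ℝ) (hq : Real.sqrt 2 ≤ q) :
    Multipliable (fun i : ℕ => (1 - q⁻¹ ^ (i + 1))) ∧
    1 - 1 / q - 1 / q ^ 2 + 1 / q ^ 5 + 1 / q ^ 7 - 1 / q ^ 12 - 1 / q ^ 15 <
      ∏' i : ℕ, (1 - q⁻¹ ^ (i + 1)) ∧
    ∏' i : ℕ, (1 - q⁻¹ ^ (i + 1)) < 1 - 1 / q := by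
  have hq0 : 0 < q := (Real.sqrt_pos.2 two_pos).trans_le hq
  have hx2 : q⁻¹ ^ 2 ≤ 1 / 2 := by
    rw [inv_pow, one_div]
    exact inv_anti₀ two_pos (Real.sq_sqrt zero_le_two ▸ pow_le_pow_left₀ (Real.sqrt_nonneg 2) hq 2)
  have hx1 : |q⁻¹| < 1 := by
    rw [abs_of_pos (inv_pos.2 hq0)]; nlinarith
  simp only [one_div, ← inv_pow]
  exact ⟨by simpa using Real.multipliable_one_sub_pow_add_add_one hx1 0,
    Real.tprod_one_sub_pow_mem_Ioo (inv_pos.2 hq0) hx2⟩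
end
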